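/- Let μ_φ be the Gibbs measure of a Lipschitz potential φ with pressure 0 and let D = D(φ) > 0 be a constant such that the exponential inequality ∫ exp(K(x,…,σ^{n−1}x)) dμ_φ(x) ≤ exp(∫ K dμ_φ-average) · exp(D Σ_{i=0}^{n−1} Lip_i(K)²) holds for all n and all separately Lipschitz K:Ω^n→ℝ. Then for every α ∈ (0,1), every t > 0, every n ≥ 2 and every integer k = k(n) ≥ 1 with k(n) ≤ (α/(2 log|A|)) log n, one has μ_φ{x : |Ĥ_{k(n)}(x_0^{n−1})/k(n) − E(Ĥ_{k(n)}/k(n))| ≥ t} ≤ 2 exp(−n^{1−α} t² / (16 D (log n)²)), where E denotes expectation with respect to μ_φ. -/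

import Mathlib

open MeasureTheory Finset
open scoped ENNReal

namespace GibbsEntropy

variable {A : Type*} [Fintype A] [DecidableEq A]

/-- The left shift `σ` on one-sided sequences `Ω = A^ℕ`. -/
def shift (x : ℕ → A) : ℕ → A := fun i => x (i + 1)

/-- The cylinder set `[w]` determined by a word `w = a_0 … a_{k-1}`. -/
def cylinder {k : ℕ} (w : Fin k → A) : Set (ℕ → A) := {x | ∀ i : Fin k, x i.val = w i}

/-- The metric `d_θ(x,y) = θ^N`, `N` the first disagreement index. -/
noncomputable def dTheta (θ : ℝ) (x y : ℕ → A) : ℝ :=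
  letI : Decidable (x = y) := Classical.dec _
  if h : x = y then 0
  else θ ^ (Nat.find (p := fun n => x n ≠ y n)
    (by by_contra hc; push_neg at hc; exact h (funext fun i => hc i)))

/-- `f` is Lipschitz w.r.t. `d_θ`, i.e. `var_m(f) ≤ C θ^m` for all `m`
(`var_m` being the oscillation over pairs agreeing on coordinates `0,…,m`). -/
def LipFun (θ : ℝ) (f : (ℕ → A) → ℝ) : Prop :=
  ∃ C : ℝ, 0 ≤ C ∧ ∀ (m : ℕ) (x y : ℕ → A), (∀ i ≤ m, x i = y i) → |f x - f y| ≤ C * θ ^ m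

/-- `|f|_θ`, the least Lipschitz constant of `f` w.r.t. `d_θ`. -/
noncomputable def lipNorm (θ : ℝ) (f : (ℕ → A) → ℝ) : ℝ :=
  sInf {C : ℝ | 0 ≤ C ∧ ∀ (m : ℕ) (x y : ℕ → A), (∀ i ≤ m, x i = y i) → |f x - f y| ≤ C * θ ^ m}

/-- A separately Lipschitz function of `n` variables in `Ω^n`. -/
def SepLip (θ : ℝ) {n : ℕ} (K : (Fin n → (ℕ → A)) → ℝ) : Prop :=
  ∀ j : Fin n, ∃ C : ℝ, 0 ≤ C ∧ ∀ (x : Fin n → (ℕ → A)) (y : ℕ → A),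
    |K x - K (Function.update x j y)| ≤ C * dTheta θ (x j) y

/-- `Lip_j(K)`, the least Lipschitz constant of `K` in its `j`-th variable. -/
noncomputable def lipCoord (θ : ℝ) {n : ℕ} (K : (Fin n → (ℕ → A)) → ℝ) (j : Fin n) : ℝ :=
  sInf {C : ℝ | 0 ≤ C ∧ ∀ (x : Fin n → (ℕ → A)) (y : ℕ → A),
    |K x - K (Function.update x j y)| ≤ C * dTheta θ (x j) y}

/-- The trajectory `(x, σx, …, σ^{n-1}x)`. -/
def traj (n : ℕ) (x : ℕ → A) : Fin n → (ℕ → A) := fun i => shift^[i.val] x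

/-- The Gibbs property (with topological pressure `0`) of `μ` for the potential `φ`:
`C⁻¹ ≤ μ([x_0^{m-1}]) / exp(∑_{k<m} φ(σ^k x)) ≤ C`. -/
def IsGibbs [MeasurableSpace A] (φ : (ℕ → A) → ℝ) (μ : Measure (ℕ → A)) : Prop :=
  ∃ C : ℝ, 1 < C ∧ ∀ (x : ℕ → A) (m : ℕ), 1 ≤ m →
    C⁻¹ * Real.exp (∑ i ∈ Finset.range m, φ (shift^[i] x)) ≤
        (μ (cylinder (fun i : Fin m => x i.val))).toReal ∧
    (μ (cylinder (fun i : Fin m => x i.val))).toReal ≤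
        C * Real.exp (∑ i ∈ Finset.range m, φ (shift^[i] x))

/-- Empirical frequency `E_k(w; x_0^{n-1})` of the word `w` in the `n`-periodization of `x`. -/
noncomputable def empFreq (n k : ℕ) (x : ℕ → A) (w : Fin k → A) : ℝ :=
  ((Finset.range n).filter (fun j => ∀ i : Fin k, x ((j + i.val) % n) = w i)).card / n

/-- `k`-block entropy `H_k(η)` of a probability vector `η` on `A^k` (`0 log 0 = 0`). -/
noncomputable def blockEnt (k : ℕ) (η : (Fin k → A) → ℝ) : ℝ :=
  -∑ w : Fin k → A, η w * Real.log (η w)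

/-- The `k`-block empirical entropy `Ĥ_k(x_0^{n-1})`. -/
noncomputable def empEnt (n k : ℕ) (x : ℕ → A) : ℝ := blockEnt k (empFreq n k x)

/-- The `k`-block conditional empirical entropy `ĥ_k = Ĥ_k - Ĥ_{k-1}`. -/
noncomputable def condEmpEnt (n k : ℕ) (x : ℕ → A) : ℝ := empEnt n k x - empEnt n (k - 1) x

/-- `k`-block relative entropy `H_k(η | ρ) = ∑ η log(η/ρ)` (conventions `0 log 0 = 0`,
`0 log (0/c) = 0`). -/
noncomputable def relEnt (k : ℕ) (η ρ : (Fin k → A) → ℝ) : ℝ :=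
  ∑ w : Fin k → A, η w * Real.log (η w / ρ w)

/-- `μ([w])` as a real number. -/
noncomputable def muWord [MeasurableSpace A] (μ : Measure (ℕ → A)) (k : ℕ) (w : Fin k → A) : ℝ :=
  (μ (cylinder w)).toReal

/-- `Δ̂_k(x_0^{n-1}) = -H_k(E_k(·;x_0^{n-1})|μ) + H_{k-1}(E_{k-1}(·;x_0^{n-1})|μ)`. -/
noncomputable def deltaHat [MeasurableSpace A] (μ : Measure (ℕ → A)) (n k : ℕ) (x : ℕ → A) : ℝ :=
  -relEnt k (empFreq n k x) (muWord μ k) +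
    relEnt (k - 1) (empFreq n (k - 1) x) (muWord μ (k - 1))

/-- Hitting time `W_n(x,y) = inf{j ≥ 1 : y_j^{j+n-1} = x_0^{n-1}}` (in `ℝ≥0∞`, `= ∞`
if there is no such `j`). -/
noncomputable def hitTime (n : ℕ) (x y : ℕ → A) : ℝ≥0∞ :=
  ⨅ (j : ℕ) (_ : 1 ≤ j ∧ ∀ i : Fin n, y (j + i.val) = x i.val), (j : ℝ≥0∞)

/-- Hitting time `τ_{[w]}(y) = inf{j ≥ 1 : y_j^{j+n-1} = w}` of the cylinder of a word `w`. -/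
noncomputable def wordHitTime {n : ℕ} (w : Fin n → A) (y : ℕ → A) : ℝ≥0∞ :=
  ⨅ (j : ℕ) (_ : 1 ≤ j ∧ ∀ i : Fin n, y (j + i.val) = w i), (j : ℝ≥0∞)

/-- The tail word `a_1^{k-1}` of a word `a_0^{k-1}`. -/
def wordTail {k : ℕ} (w : Fin k → A) : Fin (k - 1) → A := fun i => w ⟨i.val + 1, by omega⟩

end GibbsEntropy

/-!
`Ĥ_k(x_0^{n-1}) / k` is a function of the first `n` symbols, and changing one symbol changes at
most `k` of the `n` cyclic windows, hence at most `2k` of the word counts in total; since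
`t ↦ t log t` is `(1 + log n)`-Lipschitz on the integers `0, …, n`, the normalized entropy moves by
at most `B = 2 (1 + log n) / n`. Read through the first symbols of the orbit `x, σx, …, σ^{n-1}x`,
such a function is separately `d_θ`-Lipschitz with constants `B`, so the exponential inequality
makes it sub-Gaussian with variance proxy `2 D n B²`, and the Chernoff bound gives the tail
`2 exp (-n t² / (16 D (1 + log n)²))`. The constraint on `k` forces `n^α ≥ 4` and `log n ≥ 1`,
so `(1 + log n)² ≤ n^α (log n)²`.
-/

open Real ProbabilityTheory
open scoped NNReal

namespace GibbsEntropy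

section Counting

variable {ι β : Type*} [Fintype β] [DecidableEq β]

theorem sum_abs_card_filter_eq_sub_le (s : Finset ι) (f g : ι → β) :
    ∑ b, |(#{j ∈ s | f j = b} : ℝ) - #{j ∈ s | g j = b}| ≤ 2 * #{j ∈ s | f j ≠ g j} := by
  set T := {j ∈ s | f j ≠ g j}
  have hdiff : ∀ b, (#{j ∈ s | f j = b} : ℝ) - #{j ∈ s | g j = b} =
      ∑ j ∈ T, ((if f j = b then 1 else 0) - (if g j = b then 1 else 0)) := by
    intro b
    rw [Finset.sum_filter, Finset.card_filter, Finset.card_filter]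
    push_cast
    rw [← Finset.sum_sub_distrib]
    refine Finset.sum_congr rfl fun j _ => ?_
    by_cases h : f j = g j <;> simp [h]
  calc ∑ b, |(#{j ∈ s | f j = b} : ℝ) - #{j ∈ s | g j = b}|
      ≤ ∑ b, ∑ j ∈ T, ((if f j = b then (1 : ℝ) else 0) + (if g j = b then 1 else 0)) := by
        gcongr with b
        rw [hdiff]
        refine (Finset.abs_sum_le_sum_abs _ _).trans (Finset.sum_le_sum fun j _ => ?_)
        split_ifs <;> norm_num
    _ = 2 * #T := by
        rw [Finset.sum_comm]
        simp only [Finset.sum_add_distrib, Finset.sum_ite_eq, Finset.mem_univ, if_true,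
          Finset.sum_const, nsmul_eq_mul]
        ring

end Counting

variable {A : Type*} {n k : ℕ}

section EmpiricalEntropy

def initWord (n : ℕ) (x : ℕ → A) : Fin n → A := fun i => x i

def window (n k : ℕ) (x : ℕ → A) (j : ℕ) : Fin k → A := fun i => x ((j + i) % n)

theorem window_congr {x x' : ℕ → A} (h : ∀ p < n, x p = x' p) {j : ℕ} (hj : j < n) :
    window n k x j = window n k x' j :=
  funext fun _ => h _ (Nat.mod_lt _ (by omega))

variable [DecidableEq A]

def wordCount (n k : ℕ) (x : ℕ → A) (w : Fin k → A) : ℕ := #{j ∈ range n | window n k x j = w}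

theorem wordCount_le (x : ℕ → A) (w : Fin k → A) : wordCount n k x w ≤ n :=
  (card_filter_le _ _).trans_eq (card_range n)

theorem sum_wordCount [Fintype A] (x : ℕ → A) : ∑ w, wordCount n k x w = n := by
  simp only [wordCount]
  rw [← card_eq_sum_card_fiberwise (fun _ _ => mem_univ _), card_range]

theorem empFreq_eq_wordCount_div (x : ℕ → A) (w : Fin k → A) :
    empFreq n k x w = wordCount n k x w / n := by
  simp only [empFreq, wordCount, window, funext_iff]

theorem empEnt_congr [Fintype A] {x x' : ℕ → A} (h : ∀ p < n, x p = x' p) :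
    empEnt n k x = empEnt n k x' := by
  have : empFreq n k x = empFreq n k x' := by
    ext w
    simp only [empFreq_eq_wordCount_div, wordCount]
    congr 3
    exact filter_congr fun j hj => by rw [window_congr h (mem_range.1 hj)]
  rw [empEnt, empEnt, this]

/-- A site `m` is read by the windows starting at `m, m - 1, …, m - k + 1 (mod n)` only. -/
theorem card_window_ne_le {m : ℕ} {x x' : ℕ → A} (h : ∀ p < n, p ≠ m → x p = x' p) :
    #{j ∈ range n | window n k x j ≠ window n k x' j} ≤ k := by
  have hsub : {j ∈ range n | window n k x j ≠ window n k x' j} ⊆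
      (range k).image fun i => (m + n - i % n) % n := by
    intro j hj
    obtain ⟨hjn, hne⟩ := mem_filter.1 hj
    have hjn : j < n := mem_range.1 hjn
    obtain ⟨i, hi⟩ : ∃ i : Fin k, (j + i) % n = m := by
      by_contra! hno
      exact hne (funext fun i => h _ (Nat.mod_lt _ (by omega)) (hno i))
    refine mem_image.2 ⟨i, mem_range.2 i.isLt, ?_⟩
    have hr : i % n < n := Nat.mod_lt _ (by omega)
    have hjm : j + i % n ≡ m [MOD n] :=
      (Nat.ModEq.add_left j (Nat.mod_modEq i n)).trans (hi ▸ (Nat.mod_modEq (j + i) n).symm)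
    have hm' : m + n - i % n + i % n ≡ m [MOD n] := by
      rw [Nat.sub_add_cancel (by omega)]
      exact Nat.add_modEq_right
    have := hjm.trans hm'.symm
    rw [(Nat.ModEq.add_right_cancel' _ this).symm, Nat.mod_eq_of_lt hjn]
  exact (card_le_card hsub).trans (card_image_le.trans_eq (card_range k))

theorem log_natCast_le_log_natCast {a b : ℕ} (h : a ≤ b) : log a ≤ log b := by
  rcases Nat.eq_zero_or_pos a with rfl | ha
  · simpa using Real.log_natCast_nonneg b
  · exact Real.log_le_log (by positivity) (by exact_mod_cast h)

theorem natCast_mul_log_sub_log_le {a b : ℕ} (h : b ≤ a) : (b : ℝ) * (log a - log b) ≤ a - b := by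
  rcases Nat.eq_zero_or_pos b with rfl | hb
  · simp
  have hb' : (0 : ℝ) < b := by positivity
  have hba : (b : ℝ) ≤ a := by exact_mod_cast h
  have hlog := Real.log_le_sub_one_of_pos (div_pos (hb'.trans_le hba) hb')
  rw [Real.log_div (hb'.trans_le hba).ne' hb'.ne'] at hlog
  calc (b : ℝ) * (log a - log b) ≤ b * (a / b - 1) := by gcongr
    _ = a - b := by field_simp

theorem abs_natCast_mul_log_sub_le {a b N : ℕ} (ha : a ≤ N) (hb : b ≤ N) :
    |(a : ℝ) * log a - b * log b| ≤ |(a : ℝ) - b| * (1 + log N) := by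
  wlog hba : b ≤ a generalizing a b
  · rw [abs_sub_comm, abs_sub_comm (a : ℝ)]
    exact this hb ha (by omega)
  have hba' : (b : ℝ) ≤ a := by exact_mod_cast hba
  have hsplit : (a : ℝ) * log a - b * log b = (a - b) * log a + b * (log a - log b) := by ring
  have hloga : 0 ≤ log (a : ℝ) := Real.log_natCast_nonneg a
  have hlogab := log_natCast_le_log_natCast hba
  have hlogaN := log_natCast_le_log_natCast ha
  rw [hsplit, abs_of_nonneg (sub_nonneg.2 hba'), abs_of_nonneg (by
    have := mul_nonneg (sub_nonneg.2 hba') hloga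
    have := mul_nonneg (Nat.cast_nonneg (α := ℝ) b) (sub_nonneg.2 hlogab)
    linarith)]
  have := natCast_mul_log_sub_log_le hba
  nlinarith

theorem empEnt_eq_log_sub [Fintype A] (hn : 0 < n) (x : ℕ → A) :
    empEnt n k x = log n - (∑ w, (wordCount n k x w : ℝ) * log (wordCount n k x w)) / n := by
  have hn' : (n : ℝ) ≠ 0 := by positivity
  have hterm : ∀ w, empFreq n k x w * log (empFreq n k x w) =
      (wordCount n k x w : ℝ) * log (wordCount n k x w) / n - wordCount n k x w / n * log n := by
    intro w
    rw [empFreq_eq_wordCount_div]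
    rcases Nat.eq_zero_or_pos (wordCount n k x w) with h0 | hpos
    · simp [h0]
    · rw [Real.log_div (by positivity) hn']
      ring
  have hsum : ∑ w, (wordCount n k x w : ℝ) = n := by exact_mod_cast sum_wordCount x
  simp only [empEnt, blockEnt, hterm, Finset.sum_sub_distrib, ← Finset.sum_div, ← Finset.sum_mul,
    hsum, div_self hn', one_mul]
  ring

theorem abs_empEnt_sub_le [Fintype A] (hn : 0 < n) {m : ℕ} {x x' : ℕ → A}
    (h : ∀ p < n, p ≠ m → x p = x' p) :
    |empEnt n k x - empEnt n k x'| ≤ 2 * k * (1 + log n) / n := by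
  set c := wordCount n k x
  set c' := wordCount n k x'
  have hcount : ∑ w, |(c' w : ℝ) - c w| ≤ 2 * k := by
    calc ∑ w, |(c' w : ℝ) - c w| ≤ 2 * #{j ∈ range n | window n k x' j ≠ window n k x j} :=
          sum_abs_card_filter_eq_sub_le _ _ _
      _ ≤ 2 * k := by
          gcongr
          exact_mod_cast card_window_ne_le fun p hp hpm => (h p hp hpm).symm
  have hdiff : empEnt n k x - empEnt n k x' =
      (∑ w, ((c' w : ℝ) * log (c' w) - c w * log (c w))) / n := by
    rw [empEnt_eq_log_sub hn, empEnt_eq_log_sub hn, Finset.sum_sub_distrib]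
    ring
  rw [hdiff, abs_div, Nat.abs_cast]
  gcongr
  calc |∑ w, ((c' w : ℝ) * log (c' w) - c w * log (c w))|
      ≤ ∑ w, |(c' w : ℝ) - c w| * (1 + log n) :=
        (Finset.abs_sum_le_sum_abs _ _).trans (Finset.sum_le_sum fun w _ =>
          abs_natCast_mul_log_sub_le (wordCount_le x' w) (wordCount_le x w))
    _ ≤ 2 * k * (1 + log n) := by
        rw [← Finset.sum_mul]
        gcongr

def periodize (hn : 0 < n) (v : Fin n → A) : ℕ → A := fun m => v ⟨m % n, Nat.mod_lt m hn⟩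

theorem empEnt_periodize_initWord [Fintype A] (hn : 0 < n) (x : ℕ → A) :
    empEnt n k (periodize hn (initWord n x)) = empEnt n k x :=
  empEnt_congr fun p hp => by simp [periodize, initWord, Nat.mod_eq_of_lt hp]

theorem abs_empEnt_periodize_div_sub_update_le [Fintype A] (hn : 0 < n) (hk : 1 ≤ k)
    (v : Fin n → A) (j : Fin n) (a : A) :
    |empEnt n k (periodize hn v) / k - empEnt n k (periodize hn (Function.update v j a)) / k| ≤
      2 * (1 + log n) / n := by
  have hk0 : (0 : ℝ) < k := by positivity
  have hagree : ∀ p < n, p ≠ j → periodize hn v p = periodize hn (Function.update v j a) p :=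
    fun p hp hpj => by
      simp [periodize, Nat.mod_eq_of_lt hp,
        Function.update_of_ne (show (⟨p, hp⟩ : Fin n) ≠ j from Fin.ne_of_val_ne hpj)]
  rw [← sub_div, abs_div, Nat.abs_cast, div_le_iff₀ hk0]
  exact (abs_empEnt_sub_le hn hagree).trans_eq (by ring)

end EmpiricalEntropy

section Orbits

theorem shift_iterate_apply (j : ℕ) (x : ℕ → A) (m : ℕ) : shift^[j] x m = x (m + j) := by
  induction j generalizing x with
  | zero => rfl
  | succ j ih => rw [Function.iterate_succ_apply, ih]; simp only [shift]; ring_nf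

def heads (z : Fin n → ℕ → A) : Fin n → A := fun i => z i 0

theorem heads_traj (x : ℕ → A) : heads (traj n x) = initWord n x :=
  funext fun i => by simp [heads, traj, initWord, shift_iterate_apply]

theorem heads_update (z : Fin n → ℕ → A) (j : Fin n) (y : ℕ → A) :
    heads (Function.update z j y) = Function.update (heads z) j (y 0) := by
  ext i
  by_cases hij : i = j
  · subst hij; simp [heads]
  · simp [heads, Function.update_of_ne hij]

variable [DecidableEq A] {θ : ℝ}

theorem dTheta_nonneg (hθ : 0 ≤ θ) (x y : ℕ → A) : 0 ≤ dTheta θ x y := by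
  unfold dTheta
  split_ifs
  exacts [le_rfl, pow_nonneg hθ _]

theorem dTheta_eq_one_of_apply_zero_ne {x y : ℕ → A} (h : x 0 ≠ y 0) : dTheta θ x y = 1 := by
  rw [dTheta, dif_neg fun hxy => h (congrFun hxy 0), (Nat.find_eq_zero _).2 h, pow_zero]

theorem lipCoord_nonneg (K : (Fin n → ℕ → A) → ℝ) (j : Fin n) : 0 ≤ lipCoord θ K j :=
  Real.sInf_nonneg fun _ hC => hC.1

theorem lipCoord_le {K : (Fin n → ℕ → A) → ℝ} {j : Fin n} {C : ℝ} (hC : 0 ≤ C)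
    (h : ∀ x y, |K x - K (Function.update x j y)| ≤ C * dTheta θ (x j) y) :
    lipCoord θ K j ≤ C :=
  csInf_le ⟨0, fun _ hC => hC.1⟩ ⟨hC, h⟩

/-- `f ∘ heads` sees only first symbols, and points with different first symbols are at
`d_θ`-distance `1`. -/
theorem abs_comp_heads_update_le (hθ : 0 ≤ θ) {f : (Fin n → A) → ℝ} {B : ℝ}
    (hf : ∀ v j a, |f v - f (Function.update v j a)| ≤ B) (z : Fin n → ℕ → A) (j : Fin n)
    (y : ℕ → A) : |f (heads z) - f (heads (Function.update z j y))| ≤ B * dTheta θ (z j) y := by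
  rw [heads_update]
  by_cases h : z j 0 = y 0
  · have hB : 0 ≤ B := (abs_nonneg _).trans (hf (heads z) j (y 0))
    rw [← h, show z j 0 = heads z j from rfl, Function.update_eq_self, sub_self, abs_zero]
    exact mul_nonneg hB (dTheta_nonneg hθ _ _)
  · rw [dTheta_eq_one_of_apply_zero_ne h, mul_one]
    exact hf _ _ _

end Orbits

theorem measurable_initWord [MeasurableSpace A] : Measurable (initWord (A := A) n) :=
  measurable_pi_lambda _ fun i => measurable_pi_apply (i : ℕ)

/-- The exponential inequality applies to `K = s • f ∘ heads`, which is separately Lipschitz with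
constants `|s| B`. -/
theorem hasSubgaussianMGF_of_abs_sub_update_le [Fintype A] [DecidableEq A] [MeasurableSpace A]
    [MeasurableSingletonClass A] {θ D B : ℝ} {μ : Measure (ℕ → A)} [IsFiniteMeasure μ]
    (hθ : 0 ≤ θ) (hD : 0 ≤ D)
    (hIneq : ∀ K : (Fin n → (ℕ → A)) → ℝ, SepLip θ K →
      ∫ x, exp (K (traj n x)) ∂μ ≤
        exp (∫ y, K (traj n y) ∂μ) * exp (D * ∑ j : Fin n, lipCoord θ K j ^ 2))
    {f : (Fin n → A) → ℝ} (hf : ∀ v j a, |f v - f (Function.update v j a)| ≤ B) :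
    HasSubgaussianMGF (fun x => f (initWord n x) - ∫ y, f (initWord n y) ∂μ)
      (.mk (2 * D * n * B ^ 2) (by positivity)) μ := by
  set E := ∫ y, f (initWord n y) ∂μ
  -- `|B|`, not `B`: `SepLip` asks for a nonnegative constant before any point is given.
  have hK : ∀ s : ℝ, ∀ j z y, |s * f (heads z) - s * f (heads (Function.update z j y))| ≤
      |s| * |B| * dTheta θ (z j) y := fun s j z y => by
    rw [← mul_sub, abs_mul, mul_assoc]
    exact mul_le_mul_of_nonneg_left (abs_comp_heads_update_le hθ
      (fun v j a => (hf v j a).trans (le_abs_self B)) z j y) (abs_nonneg s)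
  have hmoment : ∀ s : ℝ,
      ∫ x, exp (s * f (initWord n x)) ∂μ ≤ exp (s * E) * exp (D * n * (s * B) ^ 2) := by
    intro s
    have h := hIneq (fun z => s * f (heads z)) fun j => ⟨|s| * |B|, by positivity, hK s j⟩
    simp only [heads_traj, integral_const_mul] at h
    refine h.trans (mul_le_mul_of_nonneg_left (exp_le_exp.2 ?_) (exp_pos _).le)
    have hlip : ∀ j, lipCoord θ (fun z => s * f (heads z)) j ^ 2 ≤ (s * B) ^ 2 := fun j => by
      rw [← sq_abs (s * B), abs_mul]
      exact pow_le_pow_left₀ (lipCoord_nonneg _ _) (lipCoord_le (by positivity) (hK s j)) 2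
    calc D * ∑ j, lipCoord θ (fun z => s * f (heads z)) j ^ 2 ≤ D * ∑ _j : Fin n, (s * B) ^ 2 :=
          mul_le_mul_of_nonneg_left (Finset.sum_le_sum fun j _ => hlip j) hD
      _ = D * n * (s * B) ^ 2 := by simp; ring
  refine ⟨fun s => ?_, fun s => ?_⟩
  · exact Integrable.comp_measurable (g := fun v => exp (s * (f v - E))) .of_finite
      measurable_initWord
  · calc mgf _ μ s = (∫ x, exp (s * f (initWord n x)) ∂μ) * exp (-(s * E)) := by
          rw [mgf, ← integral_mul_const]
          simp_rw [mul_sub, sub_eq_add_neg, exp_add]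
      _ ≤ exp (s * E) * exp (D * n * (s * B) ^ 2) * exp (-(s * E)) := by gcongr; exact hmoment s
      _ = exp ((2 * D * n * B ^ 2) * s ^ 2 / 2) := by
          rw [mul_right_comm, ← exp_add, add_neg_cancel, exp_zero, one_mul]
          ring_nf

theorem _root_.ProbabilityTheory.HasSubgaussianMGF.measure_abs_ge_le {Ω : Type*}
    [MeasurableSpace Ω] {μ : Measure Ω} [IsFiniteMeasure μ] {X : Ω → ℝ} {c : ℝ≥0}
    (h : HasSubgaussianMGF X c μ) {ε : ℝ} (hε : 0 ≤ ε) :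
    μ {ω | ε ≤ |X ω|} ≤ ENNReal.ofReal (2 * exp (-ε ^ 2 / (2 * c))) := by
  have hsub : {ω | ε ≤ |X ω|} ⊆ {ω | ε ≤ X ω} ∪ {ω | ε ≤ (-X) ω} := fun ω hω => by
    have hω : ε ≤ |X ω| := hω
    rcases le_abs'.1 hω with h | h
    · exact Or.inr (show ε ≤ -X ω by linarith)
    · exact Or.inl h
  calc μ {ω | ε ≤ |X ω|} ≤ μ {ω | ε ≤ X ω} + μ {ω | ε ≤ (-X) ω} :=
        (measure_mono hsub).trans (measure_union_le _ _)
    _ = ENNReal.ofReal (μ.real {ω | ε ≤ X ω}) + ENNReal.ofReal (μ.real {ω | ε ≤ (-X) ω}) := by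
        simp only [measureReal_def, ENNReal.ofReal_toReal (measure_ne_top _ _)]
    _ ≤ ENNReal.ofReal (exp (-ε ^ 2 / (2 * c))) + ENNReal.ofReal (exp (-ε ^ 2 / (2 * c))) := by
        gcongr
        exacts [h.measure_ge_le hε, h.neg.measure_ge_le hε]
    _ = ENNReal.ofReal (2 * exp (-ε ^ 2 / (2 * c))) := by
        rw [← ENNReal.ofReal_add (exp_pos _).le (exp_pos _).le, ← two_mul]

theorem rpow_one_sub_mul_one_add_log_sq_le {x α : ℝ} (hx : 0 < x) (hα : α ∈ Set.Ioc 0 1)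
    (h : log 4 ≤ α * log x) : x ^ (1 - α) * (1 + log x) ^ 2 ≤ x * log x ^ 2 := by
  have hlog4 : 1 ≤ log 4 := by
    rw [show (4 : ℝ) = 2 ^ 2 by norm_num, Real.log_pow]
    push_cast
    linarith [Real.log_two_gt_d9]
  have hlogx : 1 ≤ log x := by
    have : 0 < log x := pos_of_mul_pos_right (by linarith) hα.1.le
    nlinarith [hα.2]
  have hxα : 4 ≤ x ^ α := by
    rw [Real.rpow_def_of_pos hx, ← Real.exp_log (show (0 : ℝ) < 4 by norm_num)]
    exact exp_le_exp.2 (by linarith)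
  calc x ^ (1 - α) * (1 + log x) ^ 2 ≤ x ^ (1 - α) * (x ^ α * log x ^ 2) := by
        gcongr
        nlinarith
    _ = x * log x ^ 2 := by
        rw [← mul_assoc, ← Real.rpow_add hx, sub_add_cancel, Real.rpow_one]

theorem log_four_le_mul_log {a α x k : ℝ} (ha : 2 ≤ a) (hk : 1 ≤ k)
    (h : k ≤ α / (2 * log a) * log x) : log 4 ≤ α * log x := by
  have hlog4 : log 4 = 2 * log 2 := by
    rw [show (4 : ℝ) = 2 ^ 2 by norm_num, Real.log_pow]
    push_cast
    ring
  have hloga : log 2 ≤ log a := Real.log_le_log (by norm_num) ha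
  have h1 := hk.trans h
  rw [div_mul_eq_mul_div, le_div_iff₀ (by linarith [Real.log_pos one_lt_two])] at h1
  linarith

theorem neg_sq_div_le_of_log_four_le {x α D t : ℝ} (hx : 0 < x) (hα : α ∈ Set.Ioc 0 1)
    (hD : 0 < D) (h : log 4 ≤ α * log x) :
    -t ^ 2 / (2 * (2 * D * x * (2 * (1 + log x) / x) ^ 2)) ≤
      -(x ^ (1 - α) * t ^ 2) / (16 * D * log x ^ 2) := by
  have hlog : 0 < log x := pos_of_mul_pos_right (h.trans_lt' (Real.log_pos (by norm_num))) hα.1.le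
  rw [neg_div, neg_div, neg_le_neg_iff, div_le_div_iff₀ (by positivity) (by positivity)]
  calc x ^ (1 - α) * t ^ 2 * (2 * (2 * D * x * (2 * (1 + log x) / x) ^ 2))
      = 16 * D * t ^ 2 / x * (x ^ (1 - α) * (1 + log x) ^ 2) := by field_simp; ring
    _ ≤ 16 * D * t ^ 2 / x * (x * log x ^ 2) :=
        mul_le_mul_of_nonneg_left (rpow_one_sub_mul_one_add_log_sq_le hx hα h) (by positivity)
    _ = t ^ 2 * (16 * D * log x ^ 2) := by field_simp

end GibbsEntropy

open GibbsEntropy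

theorem statement_6_general {A : Type*} [Fintype A] [DecidableEq A] [MeasurableSpace A] [MeasurableSingletonClass A]
    (hA : 2 ≤ Fintype.card A)
    (θ : ℝ) (hθ : θ ∈ Set.Ioo (0 : ℝ) 1)
    (μ : Measure (ℕ → A)) [IsProbabilityMeasure μ]
    (D : ℝ) (hD : 0 < D)
    (hIneq : ∀ (n : ℕ), 1 ≤ n → ∀ K : (Fin n → (ℕ → A)) → ℝ, SepLip θ K →
      ∫ x, Real.exp (K (traj n x)) ∂μ ≤
        Real.exp (∫ y, K (traj n y) ∂μ) * Real.exp (D * ∑ j : Fin n, lipCoord θ K j ^ 2)) :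
    ∀ α ∈ Set.Ioo (0 : ℝ) 1, ∀ t : ℝ, 0 < t → ∀ n : ℕ, 2 ≤ n → ∀ k : ℕ, 1 ≤ k →
      (k : ℝ) ≤ α / (2 * Real.log (Fintype.card A)) * Real.log n →
      μ {x | |empEnt n k x / (k : ℝ) - ∫ y, empEnt n k y / (k : ℝ) ∂μ| ≥ t} ≤
        ENNReal.ofReal (2 * Real.exp (-((n : ℝ) ^ ((1 : ℝ) - α) * t ^ 2) /
          (16 * D * Real.log n ^ 2))) := by
  intro α hα t ht n hn k hk hkn
  have hn0 : 0 < n := by omega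
  have hsub := hasSubgaussianMGF_of_abs_sub_update_le hθ.1.le hD.le (hIneq n (by omega))
    (abs_empEnt_periodize_div_sub_update_le hn0 hk)
  simp only [empEnt_periodize_initWord] at hsub
  refine (hsub.measure_abs_ge_le ht.le).trans (ENNReal.ofReal_le_ofReal ?_)
  refine mul_le_mul_of_nonneg_left (exp_le_exp.2 ?_) zero_le_two
  exact neg_sq_div_le_of_log_four_le (by positivity) ⟨hα.1, hα.2.le⟩ hD
    (log_four_le_mul_log (by exact_mod_cast hA) (by exact_mod_cast hk) hkn)

theorem statement_6 {A : Type*} [Fintype A] [DecidableEq A] [MeasurableSpace A] [MeasurableSingletonClass A]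
    (hA : 2 ≤ Fintype.card A)
    (θ : ℝ) (hθ : θ ∈ Set.Ioo (0 : ℝ) 1)
    (φ : (ℕ → A) → ℝ) (hφ : LipFun θ φ)
    (μ : Measure (ℕ → A)) [IsProbabilityMeasure μ]
    (hσ : MeasurePreserving (shift (A := A)) μ μ)
    (hGibbs : IsGibbs φ μ)
    (D : ℝ) (hD : 0 < D)
    (hIneq : ∀ (n : ℕ), 1 ≤ n → ∀ K : (Fin n → (ℕ → A)) → ℝ, SepLip θ K →
      ∫ x, Real.exp (K (traj n x)) ∂μ ≤
        Real.exp (∫ y, K (traj n y) ∂μ) * Real.exp (D * ∑ j : Fin n, lipCoord θ K j ^ 2)) :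
    ∀ α ∈ Set.Ioo (0 : ℝ) 1, ∀ t : ℝ, 0 < t → ∀ n : ℕ, 2 ≤ n → ∀ k : ℕ, 1 ≤ k →
      (k : ℝ) ≤ α / (2 * Real.log (Fintype.card A)) * Real.log n →
      μ {x | |empEnt n k x / (k : ℝ) - ∫ y, empEnt n k y / (k : ℝ) ∂μ| ≥ t} ≤
        ENNReal.ofReal (2 * Real.exp (-((n : ℝ) ^ ((1 : ℝ) - α) * t ^ 2) /
          (16 * D * Real.log n ^ 2))) :=
  statement_6_general hA θ hθ μ D hD hIneq
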